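/- The infimum over a ∈ (0,1] of h₁(a) = (1 - (2·arccos(a) + arccos(2a-1))/(2π))/a lies in the closed interval [0.803125, 0.803325]. -/

import Mathlib

open Real Set

/-- `h₁(a) = (1 - (2·arccos a + arccos(2a-1))/(2π))/a`. -/
noncomputable def h₁ (a : ℝ) : ℝ :=
  (1 - (2 * Real.arccos a + Real.arccos (2 * a - 1)) / (2 * Real.pi)) / a

open scoped Nat

/-! With `arccosSum a = 2 arccos a + arccos (2a - 1)`, the bound `c ≤ h₁ a` means
`arccosSum a + 2πca ≤ 2π`. Since `-arccosSum' x = 2/√(1-x²) + 2/√(1-(2x-1)²)`, a lower bound `s`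
for it on `[l, r]` gives `arccosSum a ≤ arccosSum l - s (a - l)` there, and together with an upper
bound for `arccosSum l` this reduces the inequality on `[l, r]` to two numerical inequalities at
the endpoints. Eight such intervals cover `[0, 1]`. The minimum of `h₁` is near `0.7105`, and its
value there gives the upper bound. All values of `arccos` are bracketed by Taylor polynomials of
`cos`, which alternately over- and underestimate `cos` on `[0, ∞)`. -/

noncomputable def cosTaylor (n : ℕ) (t : ℝ) : ℝ :=
  ∑ k ∈ Finset.range n, (-1) ^ k * t ^ (2 * k) / (2 * k)!

noncomputable def sinTaylor (n : ℕ) (t : ℝ) : ℝ :=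
  ∑ k ∈ Finset.range n, (-1) ^ k * t ^ (2 * k + 1) / (2 * k + 1)!

theorem hasDerivAt_sinTaylor (n : ℕ) (t : ℝ) : HasDerivAt (sinTaylor n) (cosTaylor n t) t := by
  refine (HasDerivAt.fun_sum fun k _ =>
    ((hasDerivAt_pow (2 * k + 1) t).const_mul ((-1 : ℝ) ^ k)).div_const _).congr_deriv ?_
  refine Finset.sum_congr rfl fun k _ => ?_
  rw [Nat.factorial_succ]
  push_cast
  field_simp

theorem hasDerivAt_cosTaylor_succ (n : ℕ) (t : ℝ) :
    HasDerivAt (cosTaylor (n + 1)) (-sinTaylor n t) t := by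
  have h : cosTaylor (n + 1) =
      fun t => ∑ k ∈ Finset.range n, -((-1 : ℝ) ^ k * t ^ (2 * k + 2) / (2 * k + 2)!) + 1 := by
    funext t
    simp only [cosTaylor, Finset.sum_range_succ']
    simp [pow_succ, mul_add, neg_div]
  rw [h, sinTaylor, ← Finset.sum_neg_distrib]
  refine (HasDerivAt.fun_sum fun k _ => (((hasDerivAt_pow (2 * k + 2) t).const_mul
    ((-1 : ℝ) ^ k)).div_const _).neg).add_const 1 |>.congr_deriv ?_
  refine Finset.sum_congr rfl fun k _ => ?_
  rw [Nat.factorial_succ]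
  push_cast
  field_simp
  ring

theorem nonneg_of_hasDerivAt_nonneg {f f' : ℝ → ℝ} (hf : ∀ x, HasDerivAt f (f' x) x)
    (hf₀ : f 0 = 0) (hf' : ∀ x, 0 ≤ x → 0 ≤ f' x) {t : ℝ} (ht : 0 ≤ t) : 0 ≤ f t := by
  have hmono : MonotoneOn f (Ici 0) :=
    monotoneOn_of_hasDerivWithinAt_nonneg (convex_Ici 0)
      (fun x _ => (hf x).continuousAt.continuousWithinAt) (fun x _ => (hf x).hasDerivWithinAt)
      (fun x hx => hf' x (interior_subset hx))
  simpa [hf₀] using hmono self_mem_Ici ht ht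

theorem neg_one_pow_mul_sinTaylor_sub_sin_nonneg {n : ℕ}
    (hcos : ∀ t, 0 ≤ t → 0 ≤ (-1) ^ n * (cosTaylor (n + 1) t - cos t)) {t : ℝ} (ht : 0 ≤ t) :
    0 ≤ (-1) ^ n * (sinTaylor (n + 1) t - sin t) :=
  nonneg_of_hasDerivAt_nonneg
    (fun x => ((hasDerivAt_sinTaylor (n + 1) x).sub (hasDerivAt_sin x)).const_mul _)
    (by simp [sinTaylor]) hcos ht

theorem neg_one_pow_mul_cosTaylor_sub_cos_nonneg (n : ℕ) {t : ℝ} (ht : 0 ≤ t) :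
    0 ≤ (-1) ^ n * (cosTaylor (n + 1) t - cos t) := by
  induction n generalizing t with
  | zero => simpa [cosTaylor] using cos_le_one t
  | succ n ih =>
    refine nonneg_of_hasDerivAt_nonneg
      (fun x => ((hasDerivAt_cosTaylor_succ (n + 1) x).sub (hasDerivAt_cos x)).const_mul _)
      (by simp [cosTaylor, Finset.sum_range_succ']) (fun x hx => ?_) ht
    have := neg_one_pow_mul_sinTaylor_sub_sin_nonneg (fun t ht => ih ht) hx
    rw [pow_succ]
    linarith

theorem cos_le_cosTaylor (n : ℕ) {t : ℝ} (ht : 0 ≤ t) : cos t ≤ cosTaylor (2 * n + 1) t := by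
  simpa [pow_mul] using neg_one_pow_mul_cosTaylor_sub_cos_nonneg (2 * n) ht

theorem cosTaylor_le_cos (n : ℕ) {t : ℝ} (ht : 0 ≤ t) : cosTaylor (2 * n + 2) t ≤ cos t := by
  simpa [pow_succ, pow_mul] using neg_one_pow_mul_cosTaylor_sub_cos_nonneg (2 * n + 1) ht

theorem arccos_le_of_cosTaylor_le {x u : ℝ} (n : ℕ) (hu₀ : 0 ≤ u) (huπ : u ≤ π)
    (h : cosTaylor (2 * n + 1) u ≤ x) : arccos x ≤ u := by
  simpa [arccos_cos hu₀ huπ] using antitone_arccos ((cos_le_cosTaylor n hu₀).trans h)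

theorem le_arccos_of_le_cosTaylor {x w : ℝ} (n : ℕ) (hw₀ : 0 ≤ w) (hwπ : w ≤ π)
    (h : x ≤ cosTaylor (2 * n + 2) w) : w ≤ arccos x := by
  simpa [arccos_cos hw₀ hwπ] using antitone_arccos (h.trans (cosTaylor_le_cos n hw₀))

theorem arccos_le_pi_sub_of_neg_le_cosTaylor {x w : ℝ} (n : ℕ) (hw₀ : 0 ≤ w) (hwπ : w ≤ π)
    (h : -x ≤ cosTaylor (2 * n + 2) w) : arccos x ≤ π - w := by
  have := le_arccos_of_le_cosTaylor n hw₀ hwπ h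
  rw [arccos_neg] at this
  linarith

noncomputable def arccosSum (a : ℝ) : ℝ := 2 * arccos a + arccos (2 * a - 1)

theorem hasDerivAt_arccosSum {x : ℝ} (hx₀ : 0 < x) (hx₁ : x < 1) :
    HasDerivAt arccosSum (-(2 / √(1 - x ^ 2) + 2 / √(1 - (2 * x - 1) ^ 2))) x := by
  have hlin : HasDerivAt (fun x : ℝ => 2 * x - 1) 2 x := by
    simpa using ((hasDerivAt_id x).const_mul 2).sub_const 1
  refine (((hasDerivAt_arccos (by linarith) (by linarith)).const_mul 2).add
    ((hasDerivAt_arccos (by linarith) (by linarith)).comp x hlin)).congr_deriv ?_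
  ring

theorem arccosSum_add_mul_le {l r s a : ℝ} (hl : 0 ≤ l) (hr : r ≤ 1)
    (hs : ∀ x ∈ Ioo l r, s ≤ 2 / √(1 - x ^ 2) + 2 / √(1 - (2 * x - 1) ^ 2)) (ha : a ∈ Icc l r) :
    arccosSum a + s * a ≤ arccosSum l + s * l := by
  refine antitoneOn_of_hasDerivWithinAt_nonpos (f := fun x => arccosSum x + s * x)
    (f' := fun x => -(2 / √(1 - x ^ 2) + 2 / √(1 - (2 * x - 1) ^ 2)) + s)
    (convex_Icc l r) (by unfold arccosSum; fun_prop)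
    (fun x hx => ?_) (fun x hx => ?_) (left_mem_Icc.2 (ha.1.trans ha.2)) ha ha.1
  all_goals rw [interior_Icc] at hx
  · exact ((hasDerivAt_arccosSum (hl.trans_lt hx.1) (hx.2.trans_le hr)).add
      ((hasDerivAt_id x).const_mul s)).hasDerivWithinAt.congr_deriv (by ring)
  · linarith [hs x hx]

theorem arccosSum_add_mul_le_two_pi {l r p q U V c : ℝ} (hU : arccos l ≤ U)
    (hV : arccos (2 * l - 1) ≤ V) (hl : 0 ≤ l) (hr : r ≤ 1) (hp : 0 < p) (hq : 0 < q)
    (hlp : 1 - l ^ 2 ≤ p ^ 2) (hxq : ∀ x ∈ Icc l r, 1 - (2 * x - 1) ^ 2 ≤ q ^ 2)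
    (hEl : 2 * U + V + 2 * π * c * l ≤ 2 * π)
    (hEr : 2 * U + V + 2 * π * c * r ≤ 2 * π + (2 / p + 2 / q) * (r - l)) :
    ∀ a ∈ Icc l r, arccosSum a + 2 * π * c * a ≤ 2 * π := by
  intro a ha
  have hslope : ∀ x ∈ Ioo l r,
      2 / p + 2 / q ≤ 2 / √(1 - x ^ 2) + 2 / √(1 - (2 * x - 1) ^ 2) := by
    intro x hx
    have hx₀ : 0 < x := hl.trans_lt hx.1
    have hx₁ : x < 1 := hx.2.trans_le hr
    have hpx : √(1 - x ^ 2) ≤ p := (sqrt_le_left hp.le).2 (by nlinarith [hx.1])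
    have hqx : √(1 - (2 * x - 1) ^ 2) ≤ q :=
      (sqrt_le_left hq.le).2 (hxq x (Ioo_subset_Icc_self hx))
    gcongr
    · exact sqrt_pos.2 (by nlinarith)
    · exact sqrt_pos.2 (by nlinarith)
  have hmono := arccosSum_add_mul_le hl hr hslope ha
  have hl_le : arccosSum l ≤ 2 * U + V := by unfold arccosSum; linarith
  rcases le_total (2 * π * c) (2 / p + 2 / q) with hc | hc
  · nlinarith [mul_nonneg (sub_nonneg.2 hc) (sub_nonneg.2 ha.1)]
  · nlinarith [mul_nonneg (sub_nonneg.2 hc) (sub_nonneg.2 ha.2)]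

theorem forall_mem_Icc_of_split {P : ℝ → Prop} {l m r : ℝ} (hlm : ∀ a ∈ Icc l m, P a)
    (hmr : ∀ a ∈ Icc m r, P a) : ∀ a ∈ Icc l r, P a := fun a ha =>
  (le_total a m).elim (fun h => hlm a ⟨ha.1, h⟩) (fun h => hmr a ⟨h, ha.2⟩)

theorem arccosSum_add_le_two_pi :
    ∀ a ∈ Icc (0 : ℝ) 1, arccosSum a + 2 * π * (257 / 320) * a ≤ 2 * π := by
  refine forall_mem_Icc_of_split (m := 307 / 2500)
    (arccosSum_add_mul_le_two_pi (V := π) (p := 1) (q := 20513 / 31250) arccos_zero.le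
      (by norm_num) ?_ ?_ ?_ ?_ ?_ ?_ ?_ ?_) <|
  forall_mem_Icc_of_split (m := 2287 / 5000)
    (arccosSum_add_mul_le_two_pi (p := 992433 / 1000000) (q := 199273 / 200000)
      (arccos_le_of_cosTaylor_le 2 (u := 1447697 / 1000000) ?_ ?_ ?_)
      (arccos_le_pi_sub_of_neg_le_cosTaylor 2 (w := 143211 / 200000) ?_ ?_ ?_)
      ?_ ?_ ?_ ?_ ?_ ?_ ?_ ?_) <|
  forall_mem_Icc_of_split (m := 6173 / 10000)
    (arccosSum_add_mul_le_two_pi (p := 889263 / 1000000) (q := 1)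
      (arccos_le_of_cosTaylor_le 2 (u := 1095729 / 1000000) ?_ ?_ ?_)
      (arccos_le_pi_sub_of_neg_le_cosTaylor 2 (w := 1485491 / 1000000) ?_ ?_ ?_)
      ?_ ?_ ?_ ?_ ?_ ?_ ?_ ?_) <|
  forall_mem_Icc_of_split (m := 1673 / 2500)
    (arccosSum_add_mul_le_two_pi (p := 786729 / 1000000) (q := 972093 / 1000000)
      (arccos_le_of_cosTaylor_le 2 (u := 226373 / 250000) ?_ ?_ ?_)
      (arccos_le_of_cosTaylor_le 2 (u := 266799 / 200000) ?_ ?_ ?_)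
      ?_ ?_ ?_ ?_ ?_ ?_ ?_ ?_) <|
  forall_mem_Icc_of_split (m := 277 / 400)
    (arccosSum_add_mul_le_two_pi (p := 185771 / 250000) (q := 235251 / 250000)
      (arccos_le_of_cosTaylor_le 2 (u := 418833 / 500000) ?_ ?_ ?_)
      (arccos_le_of_cosTaylor_le 2 (u := 1225583 / 1000000) ?_ ?_ ?_)
      ?_ ?_ ?_ ?_ ?_ ?_ ?_ ?_) <|
  forall_mem_Icc_of_split (m := 7057 / 10000)
    (arccosSum_add_mul_le_two_pi (p := 721419 / 1000000) (q := 461459 / 500000)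
      (arccos_le_of_cosTaylor_le 2 (u := 805849 / 1000000) ?_ ?_ ?_)
      (arccos_le_of_cosTaylor_le 2 (u := 117559 / 100000) ?_ ?_ ?_)
      ?_ ?_ ?_ ?_ ?_ ?_ ?_ ?_) <|
  forall_mem_Icc_of_split (m := 452 / 625)
    (arccosSum_add_mul_le_two_pi (p := 22141 / 31250) (q := 28483 / 31250)
      (arccos_le_of_cosTaylor_le 2 (u := 787387 / 1000000) ?_ ?_ ?_)
      (arccos_le_of_cosTaylor_le 2 (u := 143351 / 125000) ?_ ?_ ?_)
      ?_ ?_ ?_ ?_ ?_ ?_ ?_ ?_)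
    (arccosSum_add_mul_le_two_pi (p := 8633 / 12500) (q := 178967 / 200000)
      (arccos_le_of_cosTaylor_le 2 (u := 762373 / 1000000) ?_ ?_ ?_)
      (arccos_le_of_cosTaylor_le 2 (u := 55403 / 50000) ?_ ?_ ?_)
      ?_ ?_ ?_ ?_ ?_ ?_ ?_ ?_)
  all_goals first
    | linarith [pi_gt_d6, pi_lt_d6]
    | (norm_num [cosTaylor, Finset.sum_range_succ]; done)
    | (intro x hx; nlinarith [hx.1, hx.2])

theorem le_h₁_iff {a c : ℝ} (ha : 0 < a) :
    c ≤ h₁ a ↔ arccosSum a + 2 * π * c * a ≤ 2 * π := by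
  change c ≤ (1 - arccosSum a / (2 * π)) / a ↔ _
  rw [le_div_iff₀ ha, le_sub_comm, div_le_iff₀ (by positivity)]
  constructor <;> intro h <;> linarith

theorem h₁_le_iff {a c : ℝ} (ha : 0 < a) :
    h₁ a ≤ c ↔ 2 * π ≤ arccosSum a + 2 * π * c * a := by
  change (1 - arccosSum a / (2 * π)) / a ≤ c ↔ _
  rw [div_le_iff₀ ha, sub_le_comm, le_div_iff₀ (by positivity)]
  constructor <;> intro h <;> linarith

theorem le_h₁ {a : ℝ} (ha : a ∈ Ioc 0 1) : (0.803125 : ℝ) ≤ h₁ a := by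
  rw [le_h₁_iff ha.1]
  convert arccosSum_add_le_two_pi a (Ioc_subset_Icc_self ha) using 3
  norm_num

theorem h₁_le : h₁ 0.7105 ≤ 0.803325 := by
  have hA : (0.780587 : ℝ) ≤ arccos 0.7105 := le_arccos_of_le_cosTaylor 2 (by norm_num)
    (by linarith [pi_gt_three]) (by norm_num [cosTaylor, Finset.sum_range_succ])
  have hB : (1.136248 : ℝ) ≤ arccos (2 * 0.7105 - 1) := le_arccos_of_le_cosTaylor 2 (by norm_num)
    (by linarith [pi_gt_three]) (by norm_num [cosTaylor, Finset.sum_range_succ])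
  rw [h₁_le_iff (by norm_num), arccosSum]
  linarith [pi_lt_d6]

/-- the infimum of `h₁` over `(0,1]` lies in `[0.803125, 0.803325]`. -/
theorem stmt7 : sInf (h₁ '' Set.Ioc (0 : ℝ) 1) ∈ Set.Icc (0.803125 : ℝ) 0.803325 := by
  have hlower : ∀ y ∈ h₁ '' Ioc (0 : ℝ) 1, (0.803125 : ℝ) ≤ y :=
    forall_mem_image.2 fun a ha => le_h₁ ha
  exact ⟨le_csInf ⟨_, mem_image_of_mem h₁ (right_mem_Ioc.2 one_pos)⟩ hlower,
    (csInf_le ⟨_, hlower⟩ (mem_image_of_mem h₁ ⟨by norm_num, by norm_num⟩)).trans h₁_le⟩
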